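/- Under the assumption that for each t and each x ∈ ℝ the conditional problem V^H_t(x) admits an optimal strategy, and that ϑ·S_T = 0 a.s. implies ϑ = 0 in L(S), each optimal strategy is affine in x: ϑ*(x,H) = ϑ^{0,t} + x ϑ^{1,t} for processes ϑ^{0,t}, ϑ^{1,t} ∈ Θ_{t,T}(0) not depending on x, and consequently V^H_t(x) = V^{(0)}_t − 2 V^{(1)}_t x + V^{(2)}_t x^2 for adapted processes V^{(0)}, V^{(1)}, V^{(2)} not depending on x. -/

import Mathlib

/-!
For each `x` the optimal gain `G (ϑstar x)` is an L²-closest point to `H - x` in the range of the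
linear map `G`, since taking expectations in the conditional optimality gives unconditional
optimality. Its residual is therefore orthogonal to that range, and orthogonality is preserved
under affine combinations of the targets `H - x`. Injectivity of `G` modulo null functions makes
a strategy with orthogonal residual unique, so `ϑstar` is affine in `x`; expanding the square
of the residual `(H - G ϑ₀) - x (1 + G ϑ₁)` inside the conditional expectation then shows that
the value is quadratic in `x`.
-/

open MeasureTheory

section L2

variable {Ω : Type*} {m : MeasurableSpace Ω} {μ : Measure Ω} {f g : Ω → ℝ}

lemma integral_add_mul_sq (hf : MemLp f 2 μ) (hg : MemLp g 2 μ) (t : ℝ) :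
    ∫ ω, (f ω + t * g ω) ^ 2 ∂μ
      = ∫ ω, f ω ^ 2 ∂μ + 2 * t * ∫ ω, f ω * g ω ∂μ + t ^ 2 * ∫ ω, g ω ^ 2 ∂μ := by
  have hfg : Integrable (fun ω => f ω * g ω) μ := hf.integrable_mul hg
  have hfg' : Integrable (fun ω => f ω ^ 2 + 2 * t * (f ω * g ω)) μ :=
    hf.integrable_sq.add (hfg.const_mul _)
  calc ∫ ω, (f ω + t * g ω) ^ 2 ∂μ
      = ∫ ω, f ω ^ 2 + 2 * t * (f ω * g ω) + t ^ 2 * g ω ^ 2 ∂μ := by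
        congr 1; funext ω; ring
    _ = _ := by
      rw [integral_add hfg' (hg.integrable_sq.const_mul _),
        integral_add hf.integrable_sq (hfg.const_mul _), integral_const_mul, integral_const_mul]

lemma integral_mul_eq_zero_of_forall_integral_sq_le (hf : MemLp f 2 μ) (hg : MemLp g 2 μ)
    (h : ∀ t : ℝ, ∫ ω, f ω ^ 2 ∂μ ≤ ∫ ω, (f ω + t * g ω) ^ 2 ∂μ) :
    ∫ ω, f ω * g ω ∂μ = 0 := by
  have hquad : ∀ t : ℝ,
      0 ≤ (∫ ω, g ω ^ 2 ∂μ) * (t * t) + 2 * (∫ ω, f ω * g ω ∂μ) * t + 0 := fun t => by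
    have := h t
    rw [integral_add_mul_sq hf hg] at this
    nlinarith
  have := discrim_le_zero hquad
  rw [discrim] at this
  nlinarith [sq_nonneg (∫ ω, f ω * g ω ∂μ)]

lemma ae_eq_zero_of_integral_sq_eq_zero (hf : Integrable (fun ω => f ω ^ 2) μ)
    (h : ∫ ω, f ω ^ 2 ∂μ = 0) : f =ᵐ[μ] 0 := by
  filter_upwards [(integral_eq_zero_iff_of_nonneg (fun ω => sq_nonneg (f ω)) hf).mp h] with ω hω
  exact pow_eq_zero_iff two_ne_zero |>.mp hω

variable {𝒢 : MeasurableSpace Ω}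

lemma integral_le_integral_of_condExp_le_condExp (h𝒢 : 𝒢 ≤ m) [SigmaFinite (μ.trim h𝒢)]
    (h : μ[f|𝒢] ≤ᵐ[μ] μ[g|𝒢]) : ∫ ω, f ω ∂μ ≤ ∫ ω, g ω ∂μ := by
  simpa only [integral_condExp h𝒢] using integral_mono_ae integrable_condExp integrable_condExp h

lemma condExp_sub_mul_sq_ae_eq {A B : Ω → ℝ} (hA : MemLp A 2 μ) (hB : MemLp B 2 μ) (x : ℝ) :
    μ[fun ω => (A ω - x * B ω) ^ 2|𝒢] =ᵐ[μ] fun ω =>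
      μ[fun ω => A ω ^ 2|𝒢] ω - 2 * μ[fun ω => A ω * B ω|𝒢] ω * x
        + μ[fun ω => B ω ^ 2|𝒢] ω * x ^ 2 := by
  have hAB : Integrable (fun ω => A ω * B ω) μ := hA.integrable_mul hB
  have hexpand : (fun ω => (A ω - x * B ω) ^ 2) = (fun ω => A ω ^ 2)
      + ((-(2 * x) : ℝ) • (fun ω => A ω * B ω) + (x ^ 2) • fun ω => B ω ^ 2) := by
    funext ω; simp only [Pi.add_apply, Pi.smul_apply, smul_eq_mul]; ring
  rw [hexpand]
  have hAB' := hAB.smul (-(2 * x))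
  have hB' := hB.integrable_sq.smul (x ^ 2)
  filter_upwards [condExp_add hA.integrable_sq (hAB'.add hB') 𝒢, condExp_add hAB' hB' 𝒢,
    condExp_smul (-(2 * x)) (fun ω => A ω * B ω) 𝒢,
    condExp_smul (x ^ 2) (fun ω => B ω ^ 2) 𝒢] with ω h₁ h₂ h₃ h₄
  simp only [h₁, Pi.add_apply, h₂, h₃, h₄, Pi.smul_apply, smul_eq_mul]
  ring

end L2

section Projection

variable {Ω Θ : Type*} {m : MeasurableSpace Ω} {μ : Measure Ω} [AddCommGroup Θ] [Module ℝ Θ]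
  {L : Θ →ₗ[ℝ] Ω → ℝ}

def IsL2Minimizer (μ : Measure Ω) (L : Θ →ₗ[ℝ] Ω → ℝ) (u : Ω → ℝ) (ϑ : Θ) : Prop :=
  ∀ ϑ' : Θ, ∫ ω, (u ω - L ϑ ω) ^ 2 ∂μ ≤ ∫ ω, (u ω - L ϑ' ω) ^ 2 ∂μ

lemma IsL2Minimizer.integral_mul_eq_zero (hL : ∀ ϑ, MemLp (L ϑ) 2 μ) {u : Ω → ℝ}
    (hu : MemLp u 2 μ) {ϑ : Θ} (hϑ : IsL2Minimizer μ L u ϑ) (ϑ' : Θ) :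
    ∫ ω, (u ω - L ϑ ω) * L ϑ' ω ∂μ = 0 := by
  refine integral_mul_eq_zero_of_forall_integral_sq_le (hu.sub (hL ϑ)) (hL ϑ') fun t => ?_
  have hshift : ∀ ω, u ω - L (ϑ - t • ϑ') ω = (u ω - L ϑ ω) + t * L ϑ' ω := fun ω => by
    simp only [map_sub, map_smul, Pi.sub_apply, Pi.smul_apply, smul_eq_mul]; ring
  simpa only [hshift] using hϑ (ϑ - t • ϑ')

lemma eq_of_forall_integral_mul_eq_zero (hL : ∀ ϑ, MemLp (L ϑ) 2 μ)
    (hinj : ∀ ϑ, L ϑ =ᵐ[μ] 0 → ϑ = 0) {u : Ω → ℝ} (hu : MemLp u 2 μ) {ϑ₁ ϑ₂ : Θ}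
    (h₁ : ∀ ϑ', ∫ ω, (u ω - L ϑ₁ ω) * L ϑ' ω ∂μ = 0)
    (h₂ : ∀ ϑ', ∫ ω, (u ω - L ϑ₂ ω) * L ϑ' ω ∂μ = 0) : ϑ₁ = ϑ₂ := by
  have hsq : ∫ ω, L (ϑ₁ - ϑ₂) ω ^ 2 ∂μ = 0 := by
    have hdiff : ∀ ω, L (ϑ₁ - ϑ₂) ω ^ 2
        = (u ω - L ϑ₂ ω) * L (ϑ₁ - ϑ₂) ω - (u ω - L ϑ₁ ω) * L (ϑ₁ - ϑ₂) ω := fun ω => by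
      simp only [map_sub, Pi.sub_apply]; ring
    have hint : ∀ ϑ, Integrable (fun ω => (u ω - L ϑ ω) * L (ϑ₁ - ϑ₂) ω) μ := fun ϑ =>
      (hu.sub (hL ϑ)).integrable_mul (hL _)
    rw [integral_congr_ae (ae_of_all _ hdiff), integral_sub (hint ϑ₂) (hint ϑ₁), h₁, h₂,
      sub_zero]
  exact sub_eq_zero.mp (hinj _ (ae_eq_zero_of_integral_sq_eq_zero (hL _).integrable_sq hsq))

lemma IsL2Minimizer.eq_add_smul_sub (hL : ∀ ϑ, MemLp (L ϑ) 2 μ)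
    (hinj : ∀ ϑ, L ϑ =ᵐ[μ] 0 → ϑ = 0) {a b : Ω → ℝ} (ha : MemLp a 2 μ) (hb : MemLp b 2 μ)
    {ϑ : ℝ → Θ} (hϑ : ∀ x : ℝ, IsL2Minimizer μ L (fun ω => a ω - x * b ω) (ϑ x)) (x : ℝ) :
    ϑ x = ϑ 0 + x • (ϑ 1 - ϑ 0) := by
  have hu : ∀ y : ℝ, MemLp (fun ω => a ω - y * b ω) 2 μ := fun y => ha.sub (hb.const_mul y)
  have horth : ∀ y ϑ', ∫ ω, (a ω - y * b ω - L (ϑ y) ω) * L ϑ' ω ∂μ = 0 := fun y =>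
    (hϑ y).integral_mul_eq_zero hL (hu y)
  refine eq_of_forall_integral_mul_eq_zero hL hinj (hu x) (horth x) fun ϑ' => ?_
  -- since the target is affine in `x`, so is the residual of the interpolating strategy
  have hinterp : ∀ ω, (a ω - x * b ω - L (ϑ 0 + x • (ϑ 1 - ϑ 0)) ω) * L ϑ' ω
      = (1 - x) * ((a ω - 0 * b ω - L (ϑ 0) ω) * L ϑ' ω)
        + x * ((a ω - 1 * b ω - L (ϑ 1) ω) * L ϑ' ω) := fun ω => by
    simp only [map_add, map_smul, map_sub, Pi.add_apply, Pi.smul_apply, Pi.sub_apply,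
      smul_eq_mul]
    ring
  have hint : ∀ y c : ℝ, Integrable (fun ω => c * ((a ω - y * b ω - L (ϑ y) ω) * L ϑ' ω)) μ :=
    fun y c => (((hu y).sub (hL _)).integrable_mul (hL ϑ')).const_mul c
  rw [integral_congr_ae (ae_of_all _ hinterp), integral_add (hint 0 _) (hint 1 _),
    integral_const_mul, integral_const_mul, horth 0, horth 1]
  ring

end Projection

/-- `𝒢 = F_t`, `Θ = Θ_{t,T}(0)` and `G ϑ = ∫_t^T ϑ_r dS_r`; `V x = V^H_t(x)` is encoded as an
a.e. lower bound of the conditional errors which `ϑstar x` attains. -/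
theorem optimal_strategy_affine_value_quadratic
    {Ω : Type*} {m : MeasurableSpace Ω} (μ : Measure Ω) [IsProbabilityMeasure μ]
    (𝒢 : MeasurableSpace Ω) (h𝒢 : 𝒢 ≤ m)
    (H : Ω → ℝ) (hH : MemLp H 2 μ)
    (Θ : Type*) [AddCommGroup Θ] [Module ℝ Θ]
    (G : Θ → Ω → ℝ)
    (hG2 : ∀ ϑ, MemLp (G ϑ) 2 μ)
    (hGadd : ∀ ϑ₁ ϑ₂ : Θ, G (ϑ₁ + ϑ₂) = fun ω => G ϑ₁ ω + G ϑ₂ ω)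
    (hGsmul : ∀ (c : ℝ) (ϑ : Θ), G (c • ϑ) = fun ω => c * G ϑ ω)
    (hinj : ∀ ϑ : Θ, (G ϑ =ᵐ[μ] 0) → ϑ = 0)
    (V : ℝ → Ω → ℝ) (ϑstar : ℝ → Θ)
    (hVle : ∀ x : ℝ, ∀ ϑ : Θ,
      V x ≤ᵐ[μ] μ[fun ω => (H ω - x - G ϑ ω) ^ 2 | 𝒢])
    (hopt : ∀ x : ℝ,
      V x =ᵐ[μ] μ[fun ω => (H ω - x - G (ϑstar x) ω) ^ 2 | 𝒢]) :
    (∃ ϑ0 ϑ1 : Θ, ∀ x : ℝ, ϑstar x = ϑ0 + x • ϑ1) ∧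
    (∃ V0 V1 V2 : Ω → ℝ,
      AEStronglyMeasurable[𝒢] V0 μ ∧ AEStronglyMeasurable[𝒢] V1 μ ∧
      AEStronglyMeasurable[𝒢] V2 μ ∧
      ∀ x : ℝ, V x =ᵐ[μ] fun ω => V0 ω - 2 * V1 ω * x + V2 ω * x ^ 2) := by
  let L : Θ →ₗ[ℝ] Ω → ℝ := { toFun := G, map_add' := hGadd, map_smul' := hGsmul }
  have hmin : ∀ x : ℝ, IsL2Minimizer μ L (fun ω => H ω - x * 1) (ϑstar x) := fun x ϑ =>
    integral_le_integral_of_condExp_le_condExp h𝒢 <| by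
      filter_upwards [hopt x, hVle x ϑ] with ω h₁ h₂
      simpa only [L, LinearMap.coe_mk, AddHom.coe_mk, mul_one, ← h₁] using h₂
  have haff := IsL2Minimizer.eq_add_smul_sub (L := L) hG2 hinj hH (memLp_const 1) hmin
  refine ⟨⟨ϑstar 0, ϑstar 1 - ϑstar 0, haff⟩, ?_⟩
  have hA : MemLp (fun ω => H ω - G (ϑstar 0) ω) 2 μ := hH.sub (hG2 (ϑstar 0))
  have hB : MemLp (fun ω => 1 + G (ϑstar 1 - ϑstar 0) ω) 2 μ :=
    (memLp_const (1 : ℝ)).add (hG2 (ϑstar 1 - ϑstar 0))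
  have hres : ∀ x : ℝ, (fun ω => (H ω - x - G (ϑstar x) ω) ^ 2)
      = fun ω => (H ω - G (ϑstar 0) ω - x * (1 + G (ϑstar 1 - ϑstar 0) ω)) ^ 2 := fun x => by
    funext ω; rw [haff x, hGadd, hGsmul]; ring
  exact ⟨_, _, _, stronglyMeasurable_condExp.aestronglyMeasurable,
    stronglyMeasurable_condExp.aestronglyMeasurable,
    stronglyMeasurable_condExp.aestronglyMeasurable,
    fun x => (hopt x).trans (hres x ▸ condExp_sub_mul_sq_ae_eq hA hB x)⟩
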